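/- Let X be a normed space and (xₙ) a bounded 2-co-lacunary sequence in X. (a) For any x ∈ X, there exists m ∈ ℕ such that (xₙ − x)_{n ≥ m} is 2-co-lacunary. (b) If (yₙ) ⊂ X satisfies Σₙ ‖xₙ − yₙ‖ < ∞, then there exists m ∈ ℕ such that (yₙ)_{n ≥ m} is 2-co-lacunary. -/
import Mathlib


/-- A sequence `(xₙ)` in a normed space `X` is `2`-co-lacunary if there is `δ > 0` with
`δ (∑ |aₙ|²)^{1/2} ≤ ‖∑ aₙ xₙ‖` for every finite sequence of scalars `(aₙ)`. -/
def IsTwoCoLacunary {X : Type*} [NormedAddCommGroup X] [NormedSpace ℂ X]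
    (x : ℕ → X) : Prop :=
  ∃ δ : ℝ, 0 < δ ∧ ∀ (n : ℕ) (a : ℕ → ℂ),
    δ * Real.sqrt (∑ k ∈ Finset.range n, ‖a k‖ ^ 2) ≤ ‖∑ k ∈ Finset.range n, a k • x k‖

/-- A tail of a 2-co-lacunary sequence satisfies the same estimate. -/
lemma tail_colac {X : Type*} [NormedAddCommGroup X] [NormedSpace ℂ X] {x : ℕ → X} {δ : ℝ}
    (h : ∀ (n : ℕ) (a : ℕ → ℂ),
      δ * Real.sqrt (∑ k ∈ Finset.range n, ‖a k‖ ^ 2) ≤ ‖∑ k ∈ Finset.range n, a k • x k‖)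
    (m n : ℕ) (a : ℕ → ℂ) :
    δ * Real.sqrt (∑ k ∈ Finset.range n, ‖a k‖ ^ 2)
      ≤ ‖∑ k ∈ Finset.range n, a k • x (k + m)‖ := by
  have key := h (m + n) (fun k => if m ≤ k then a (k - m) else 0)
  rw [Finset.sum_range_add, Finset.sum_range_add] at key
  have e1 : (∑ k ∈ Finset.range m,
      ‖(fun k => if m ≤ k then a (k - m) else 0) k‖ ^ 2) = 0 := by
    apply Finset.sum_eq_zero
    intro k hk
    simp [Nat.not_le.mpr (Finset.mem_range.mp hk)]
  have e2 : (∑ k ∈ Finset.range m,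
      (fun k => if m ≤ k then a (k - m) else 0) k • x k) = 0 := by
    apply Finset.sum_eq_zero
    intro k hk
    simp [Nat.not_le.mpr (Finset.mem_range.mp hk)]
  have e3 : (∑ k ∈ Finset.range n,
      ‖(fun k => if m ≤ k then a (k - m) else 0) (m + k)‖ ^ 2)
      = ∑ k ∈ Finset.range n, ‖a k‖ ^ 2 := by
    apply Finset.sum_congr rfl
    intro k _
    simp
  have e4 : (∑ k ∈ Finset.range n,
      (fun k => if m ≤ k then a (k - m) else 0) (m + k) • x (m + k))
      = ∑ k ∈ Finset.range n, a k • x (k + m) := by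
    apply Finset.sum_congr rfl
    intro k _
    simp [Nat.add_comm m k]
  rw [e1, e2, e3, e4, zero_add, zero_add] at key
  exact key

set_option maxHeartbeats 1600000 in
/-- Lemma 3.5 (perturbation of 2-co-lacunary sequences): if `(xₙ)` is a bounded
`2`-co-lacunary sequence in a normed space `X`, then
(a) for every `x ∈ X` some tail `(xₙ − x)_{n ≥ m}` is `2`-co-lacunary, and
(b) if `∑ₙ ‖xₙ − yₙ‖ < ∞` then some tail `(yₙ)_{n ≥ m}` is `2`-co-lacunary. -/
theorem gundy_stmt17 (X : Type) [NormedAddCommGroup X] [NormedSpace ℂ X]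
    (x : ℕ → X) (hbdd : ∃ C : ℝ, ∀ n, ‖x n‖ ≤ C) (hx : IsTwoCoLacunary x) :
    (∀ x₀ : X, ∃ m : ℕ, IsTwoCoLacunary fun n => x (n + m) - x₀) ∧
    (∀ y : ℕ → X, Summable (fun n => ‖x n - y n‖) →
      ∃ m : ℕ, IsTwoCoLacunary fun n => y (n + m)) := by
  obtain ⟨δ, hδ, h⟩ := hx
  constructor
  · -- part (a)
    intro x₀
    by_cases hx0 : x₀ = 0
    · refine ⟨0, δ, hδ, fun n a => ?_⟩
      simpa [hx0] using h n a
    · by_contra hcon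
      push_neg at hcon
      simp only [IsTwoCoLacunary, not_exists, not_and, not_forall, not_le] at hcon
      -- hcon : ∀ m δ', 0 < δ' → ∃ n a, ‖∑ aₖ • (x (k+m) - x₀)‖ < δ' * √(∑ ‖aₖ‖²)
      have hK : (0:ℝ) < ‖x₀‖ := norm_pos_iff.mpr hx0
      obtain ⟨n, a, ha⟩ := hcon 0 (δ / 2) (by positivity)
      set S := ∑ k ∈ Finset.range n, ‖a k‖ ^ 2 with hS
      set t := Real.sqrt S with ht
      have ht0 : 0 < t := by
        by_contra hc
        push_neg at hc
        have h0 : t = 0 := le_antisymm hc (Real.sqrt_nonneg _)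
        rw [h0, mul_zero] at ha
        exact (norm_nonneg _).not_gt ha
      set s := ∑ k ∈ Finset.range n, a k with hs
      have key1 : ‖(∑ k ∈ Finset.range n, a k • x k) - s • x₀‖ < δ / 2 * t := by
        have : (∑ k ∈ Finset.range n, a k • (x (k + 0) - x₀))
            = (∑ k ∈ Finset.range n, a k • x k) - s • x₀ := by
          simp [smul_sub, Finset.sum_sub_distrib, hs, Finset.sum_smul]
        rw [this] at ha
        exact ha
      set A := ‖s‖ with hA
      set ε := min (δ / 2) (δ ^ 2 * t / (8 * ‖x₀‖ * (A + 1))) with hε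
      have hA0 : (0:ℝ) ≤ A := norm_nonneg _
      have hεb : 0 < δ ^ 2 * t / (8 * ‖x₀‖ * (A + 1)) := by
        apply div_pos (mul_pos (pow_pos hδ 2) ht0)
        have h1 : (0:ℝ) < A + 1 := by linarith
        have h8 : (0:ℝ) < 8 * ‖x₀‖ := by linarith
        exact mul_pos h8 h1
      have hε0 : 0 < ε := lt_min (half_pos hδ) hεb
      have hε1 : ε ≤ δ / 2 := min_le_left _ _
      have hε2 : ε * (8 * ‖x₀‖ * (A + 1)) ≤ δ ^ 2 * t := by
        have := min_le_right (δ / 2) (δ ^ 2 * t / (8 * ‖x₀‖ * (A + 1)))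
        rw [le_div_iff₀ (by positivity)] at this
        exact this
      obtain ⟨n', a', ha'⟩ := hcon n ε hε0
      set S' := ∑ k ∈ Finset.range n', ‖a' k‖ ^ 2 with hS'
      set t' := Real.sqrt S' with ht'
      have ht'0 : 0 < t' := by
        by_contra hc
        push_neg at hc
        have h0 : t' = 0 := le_antisymm hc (Real.sqrt_nonneg _)
        rw [h0, mul_zero] at ha'
        exact (norm_nonneg _).not_gt ha' 
      set s' := ∑ k ∈ Finset.range n', a' k with hs'
      set W := ∑ k ∈ Finset.range n', a' k • x (k + n) with hW
      have key2 : ‖W - s' • x₀‖ < ε * t' := by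
        have : (∑ k ∈ Finset.range n', a' k • (x (k + n) - x₀)) = W - s' • x₀ := by
          simp [smul_sub, Finset.sum_sub_distrib, hs', hW, Finset.sum_smul]
        rw [this] at ha'
        exact ha'
      have hT : δ * t' ≤ ‖W‖ := tail_colac h n n' a'
      have hs'big : (δ - ε) * t' ≤ ‖s'‖ * ‖x₀‖ := by
        have h1 : ‖W‖ - ‖W - s' • x₀‖ ≤ ‖s' • x₀‖ := by
          have := norm_sub_norm_le W (W - s' • x₀)
          simpa using this
        have h2 : ‖s' • x₀‖ = ‖s'‖ * ‖x₀‖ := norm_smul _ _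
        nlinarith [key2, hT]
      have hδε : δ / 2 ≤ δ - ε := by linarith
      have hs'pos : (0:ℝ) < ‖s'‖ := by
        have : (0:ℝ) < (δ - ε) * t' := by
          apply mul_pos (by linarith) ht'0
        nlinarith [norm_nonneg s', hK]
      have hs'ne : s' ≠ 0 := by
        intro hcontra
        rw [hcontra] at hs'pos
        simp at hs'pos
      -- key product bound
      have hbound : A * (ε * t') ≤ (δ / 4 * t) * ‖s'‖ := by
        have h3 : (δ / 2) * t' ≤ ‖s'‖ * ‖x₀‖ :=
          le_trans (mul_le_mul_of_nonneg_right hδε ht'0.le) hs'big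
        have h5 : A * ε * ‖x₀‖ * 8 ≤ δ ^ 2 * t := by
          have e1 : A * ε * ‖x₀‖ * 8 = (ε * (8 * ‖x₀‖)) * A := by ring
          have e2 : ε * (8 * ‖x₀‖ * (A + 1)) = (ε * (8 * ‖x₀‖)) * (A + 1) := by ring
          have h5a : (ε * (8 * ‖x₀‖)) * A ≤ (ε * (8 * ‖x₀‖)) * (A + 1) :=
            mul_le_mul_of_nonneg_left (by linarith) (mul_nonneg hε0.le (by linarith))
          rw [e1]
          rw [e2] at hε2
          linarith
        have h4 : A * (ε * t') * ‖x₀‖ ≤ (δ / 4 * t) * ((δ / 2) * t') := by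
          have e1 : A * (ε * t') * ‖x₀‖ = (A * ε * ‖x₀‖) * t' := by ring
          have e2 : (δ / 4 * t) * ((δ / 2) * t') = (δ ^ 2 * t / 8) * t' := by ring
          rw [e1, e2]
          exact mul_le_mul_of_nonneg_right (by linarith) ht'0.le
        have hq : (0:ℝ) ≤ δ / 4 * t := le_of_lt (mul_pos (by linarith) ht0)
        have h6 : A * (ε * t') * ‖x₀‖ ≤ ((δ / 4 * t) * ‖s'‖) * ‖x₀‖ := by
          calc A * (ε * t') * ‖x₀‖ ≤ (δ / 4 * t) * ((δ / 2) * t') := h4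
            _ ≤ (δ / 4 * t) * (‖s'‖ * ‖x₀‖) := mul_le_mul_of_nonneg_left h3 hq
            _ = ((δ / 4 * t) * ‖s'‖) * ‖x₀‖ := by ring
        exact le_of_mul_le_mul_right h6 hK
      -- the combined coefficient sequence
      set c : ℕ → ℂ := fun k => if k < n then a k else -(s / s') * a' (k - n) with hc
      have hsum1 : (∑ k ∈ Finset.range n, c k • x k)
          = ∑ k ∈ Finset.range n, a k • x k := by
        apply Finset.sum_congr rfl
        intro k hk
        simp [hc, Finset.mem_range.mp hk]
      have hsum2 : (∑ k ∈ Finset.range n', c (n + k) • x (n + k))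
          = -((s / s') • W) := by
        rw [hW, Finset.smul_sum, ← Finset.sum_neg_distrib]
        apply Finset.sum_congr rfl
        intro k _
        have hnk : ¬ (n + k < n) := by omega
        have hxx : x (n + k) = x (k + n) := by rw [Nat.add_comm]
        simp only [hc, hnk, if_false, Nat.add_sub_cancel_left]
        rw [hxx, smul_smul, ← neg_smul, neg_mul]
      have hsum : (∑ k ∈ Finset.range (n + n'), c k • x k)
          = (∑ k ∈ Finset.range n, a k • x k) - (s / s') • W := by
        rw [Finset.sum_range_add, hsum1, hsum2, sub_eq_add_neg]
      have hSsum : S ≤ ∑ k ∈ Finset.range (n + n'), ‖c k‖ ^ 2 := by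
        rw [hS]
        have e : (∑ k ∈ Finset.range n, ‖a k‖ ^ 2) = ∑ k ∈ Finset.range n, ‖c k‖ ^ 2 := by
          apply Finset.sum_congr rfl
          intro k hk
          simp [hc, Finset.mem_range.mp hk]
        rw [e]
        apply Finset.sum_le_sum_of_subset_of_nonneg
        · exact Finset.range_subset_range.mpr (Nat.le_add_right n n')
        · intro i _ _
          exact sq_nonneg _
      have hlow : δ * t ≤ ‖∑ k ∈ Finset.range (n + n'), c k • x k‖ := by
        calc δ * t ≤ δ * Real.sqrt (∑ k ∈ Finset.range (n + n'), ‖c k‖ ^ 2) := by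
              apply mul_le_mul_of_nonneg_left (Real.sqrt_le_sqrt hSsum) hδ.le
          _ ≤ _ := h (n + n') c
      have hhigh : ‖∑ k ∈ Finset.range (n + n'), c k • x k‖ < δ / 2 * t + δ / 4 * t := by
        rw [hsum]
        have e : (∑ k ∈ Finset.range n, a k • x k) - (s / s') • W
            = ((∑ k ∈ Finset.range n, a k • x k) - s • x₀) - (s / s') • (W - s' • x₀) := by
          rw [smul_sub, smul_smul]
          have : s / s' * s' = s := div_mul_cancel₀ s hs'ne
          rw [this]
          abel
        rw [e]
        have h1 : ‖((∑ k ∈ Finset.range n, a k • x k) - s • x₀) - (s / s') • (W - s' • x₀)‖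
            ≤ ‖(∑ k ∈ Finset.range n, a k • x k) - s • x₀‖ + ‖(s / s') • (W - s' • x₀)‖ :=
          norm_sub_le _ _
        have h2 : ‖(s / s') • (W - s' • x₀)‖ ≤ δ / 4 * t := by
          rw [norm_smul]
          have h3 : ‖(s : ℂ) / s'‖ * ‖W - s' • x₀‖ ≤ ‖(s : ℂ) / s'‖ * (ε * t') :=
            mul_le_mul_of_nonneg_left key2.le (norm_nonneg _)
          have h4 : ‖(s : ℂ) / s'‖ = A / ‖s'‖ := by rw [norm_div]
          have h5 : A / ‖s'‖ * (ε * t') ≤ δ / 4 * t := by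
            rw [div_mul_eq_mul_div, div_le_iff₀ hs'pos]
            exact hbound
          calc ‖(s : ℂ) / s'‖ * ‖W - s' • x₀‖ ≤ ‖(s : ℂ) / s'‖ * (ε * t') := h3
              _ = A / ‖s'‖ * (ε * t') := by rw [h4]
              _ ≤ δ / 4 * t := h5
        calc ‖((∑ k ∈ Finset.range n, a k • x k) - s • x₀) - (s / s') • (W - s' • x₀)‖
            ≤ ‖(∑ k ∈ Finset.range n, a k • x k) - s • x₀‖ + ‖(s / s') • (W - s' • x₀)‖ := h1
          _ < δ / 2 * t + δ / 4 * t := by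
              apply add_lt_add_of_lt_of_le key1 h2
      have hpos : 0 < δ * t := mul_pos hδ ht0
      linarith
  · -- part (b)
    intro y hy
    have htend := tendsto_sum_nat_add (fun n => ‖x n - y n‖)
    have hev : ∀ᶠ m in Filter.atTop,
        (∑' k, ‖x (k + m) - y (k + m)‖) < δ / 2 := by
      have := htend.eventually (gt_mem_nhds (by positivity : (0:ℝ) < δ / 2))
      exact this
    obtain ⟨m, hm⟩ := hev.exists
    refine ⟨m, δ / 2, by positivity, fun n a => ?_⟩
    set S := ∑ k ∈ Finset.range n, ‖a k‖ ^ 2 with hS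
    set t := Real.sqrt S with ht
    have ht0 : 0 ≤ t := Real.sqrt_nonneg _
    have hsummable : Summable fun k => ‖x (k + m) - y (k + m)‖ :=
      (summable_nat_add_iff m).mpr hy
    have hak : ∀ k ∈ Finset.range n, ‖a k‖ ≤ t := by
      intro k hk
      have h1 : ‖a k‖ ^ 2 ≤ S := by
        rw [hS]
        exact Finset.single_le_sum (f := fun i => ‖a i‖ ^ 2) (fun i _ => sq_nonneg _) hk
      calc ‖a k‖ = Real.sqrt (‖a k‖ ^ 2) := by
            rw [Real.sqrt_sq (norm_nonneg _)]
        _ ≤ t := Real.sqrt_le_sqrt h1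
    have hdiff : ‖(∑ k ∈ Finset.range n, a k • x (k + m))
        - (∑ k ∈ Finset.range n, a k • y (k + m))‖ ≤ t * (δ / 2) := by
      rw [← Finset.sum_sub_distrib]
      calc ‖∑ k ∈ Finset.range n, (a k • x (k + m) - a k • y (k + m))‖
          ≤ ∑ k ∈ Finset.range n, ‖a k • x (k + m) - a k • y (k + m)‖ :=
            norm_sum_le _ _
        _ = ∑ k ∈ Finset.range n, ‖a k‖ * ‖x (k + m) - y (k + m)‖ := by
            apply Finset.sum_congr rfl
            intro k _
            rw [← smul_sub, norm_smul]
        _ ≤ ∑ k ∈ Finset.range n, t * ‖x (k + m) - y (k + m)‖ := by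
            apply Finset.sum_le_sum
            intro k hk
            exact mul_le_mul_of_nonneg_right (hak k hk) (norm_nonneg _)
        _ = t * ∑ k ∈ Finset.range n, ‖x (k + m) - y (k + m)‖ := by
            rw [Finset.mul_sum]
        _ ≤ t * (δ / 2) := by
            apply mul_le_mul_of_nonneg_left _ ht0
            calc (∑ k ∈ Finset.range n, ‖x (k + m) - y (k + m)‖)
                ≤ ∑' k, ‖x (k + m) - y (k + m)‖ :=
                  Summable.sum_le_tsum _ (fun i _ => norm_nonneg _) hsummable
              _ ≤ δ / 2 := hm.le
    have hlow : δ * t ≤ ‖∑ k ∈ Finset.range n, a k • x (k + m)‖ := tail_colac h m n a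
    have := norm_sub_norm_le (∑ k ∈ Finset.range n, a k • x (k + m))
      (∑ k ∈ Finset.range n, a k • y (k + m))
    have hfinal : δ * t - t * (δ / 2) ≤ ‖∑ k ∈ Finset.range n, a k • y (k + m)‖ := by
      linarith
    calc δ / 2 * t = δ * t - t * (δ / 2) := by ring
      _ ≤ _ := hfinal
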